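/- arXiv:1204.1696 — 3 statements merged into one kernel-verified Lean document; each statement's English description precedes it below -/
import Mathlib

section
/- Let Φ be a Schwarz map on a unital C*-algebra 𝔸 (i.e., Φ linear, Φ(x*) = Φ(x)*, and Φ(x)*Φ(x) ≤ Φ(x*x) for all x). Set X = Φ(f*f) − Φ(f)*Φ(f), Y = Φ(g*g) − Φ(g)*Φ(g), Z = Φ(f*g) − Φ(f)*Φ(g). Then for every state φ on 𝔸, |φ(Z)| ≤ φ(X)^{1/2} · φ(Y)^{1/2}. -/
/-!
The map `(x, y) ↦ φ (Φ (x⋆y) - Φ(x)⋆Φ(y))` is a sesquilinear form on `𝔸`, and the Schwarz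
inequality for `Φ` together with the positivity of `φ` make it nonnegative on the diagonal. Over `ℂ`
a form that is real on the diagonal is Hermitian (polarization), so the claim is the Cauchy–Schwarz
inequality for this form.
-/

open scoped ComplexOrder

namespace LinearMap

theorem IsSymm.norm_apply_le_sqrt_mul_sqrt {𝕜 M : Type*} [RCLike 𝕜] [AddCommGroup M]
    [Module 𝕜 M] {B : M →ₗ⋆[𝕜] M →ₗ[𝕜] 𝕜} (hsymm : B.IsSymm)
    (hnonneg : ∀ x, 0 ≤ RCLike.re (B x x)) (x y : M) :
    ‖B x y‖ ≤ √(RCLike.re (B x x)) * √(RCLike.re (B y y)) := by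
  let core : PreInnerProductSpace.Core 𝕜 M :=
    { inner := fun x y => B x y
      conj_inner_symm := fun x y => hsymm.eq y x
      re_inner_nonneg := hnonneg
      add_left := fun x y z => by simp
      smul_left := fun x y r => by simp }
  have key : ‖B x y‖ * ‖B y x‖ ≤ RCLike.re (B x x) * RCLike.re (B y y) :=
    InnerProductSpace.Core.inner_mul_inner_self_le (𝕜 := 𝕜) x y
  rw [← hsymm.eq x y, RCLike.norm_conj] at key
  calc ‖B x y‖ = √(‖B x y‖ * ‖B x y‖) := (Real.sqrt_mul_self (norm_nonneg _)).symm
    _ ≤ √(RCLike.re (B x x) * RCLike.re (B y y)) := Real.sqrt_le_sqrt key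
    _ = √(RCLike.re (B x x)) * √(RCLike.re (B y y)) := Real.sqrt_mul (hnonneg x) _

theorem IsNonneg.isSymm {M : Type*} [AddCommGroup M] [Module ℂ M]
    {B : M →ₗ⋆[ℂ] M →ₗ[ℂ] ℂ} (hB : B.IsNonneg) : B.IsSymm := by
  have him (z : M) : (B z z).im = 0 := ((Complex.nonneg_iff.1 (hB.nonneg z)).2).symm
  refine ⟨fun x y => ?_⟩
  have hsum : (B x y + B y x).im = 0 := by
    simpa [him x, him y, add_comm] using him (x + y)
  have hrot : (B x y - B y x).re = 0 := by
    simpa [him x, him y, sub_eq_add_neg, add_comm] using him (x + Complex.I • y)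
  apply Complex.ext
  · simp only [Complex.sub_re] at hrot
    simp only [Complex.conj_re]
    linarith
  · simp only [Complex.add_im] at hsum
    simp only [Complex.conj_im]
    linarith

end LinearMap

section SchwarzDefect

variable {𝔸 : Type*} [NonUnitalRing 𝔸] [StarRing 𝔸] [Module ℂ 𝔸] [StarModule ℂ 𝔸]
  [IsScalarTower ℂ 𝔸 𝔸] [SMulCommClass ℂ 𝔸 𝔸]

def schwarzDefect (Φ : 𝔸 →ₗ[ℂ] 𝔸) (φ : 𝔸 →ₗ[ℂ] ℂ) : 𝔸 →ₗ⋆[ℂ] 𝔸 →ₗ[ℂ] ℂ :=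
  LinearMap.mk₂'ₛₗ _ _ (fun x y => φ (Φ (star x * y) - star (Φ x) * Φ y))
    (fun x y z => by simp only [star_add, add_mul, map_add, map_sub]; ring)
    (fun c x y => by simp only [star_smul, smul_mul_assoc, map_smul, ← smul_sub,
      Complex.star_def])
    (fun x y z => by simp only [mul_add, map_add, map_sub]; ring)
    (fun c x y => by simp only [mul_smul_comm, map_smul, ← smul_sub, RingHom.id_apply])

theorem schwarzDefect_isNonneg [PartialOrder 𝔸] [StarOrderedRing 𝔸] {Φ : 𝔸 →ₗ[ℂ] 𝔸}
    (hΦ : ∀ x, star (Φ x) * Φ x ≤ Φ (star x * x)) {φ : 𝔸 →ₗ[ℂ] ℂ}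
    (hφ : ∀ a, 0 ≤ a → 0 ≤ φ a) : (schwarzDefect Φ φ).IsNonneg :=
  ⟨fun x => hφ _ (sub_nonneg.2 (hΦ x))⟩

end SchwarzDefect

theorem uchiyama_schwarz_state_inequality_general
    {𝔸 : Type*} [CStarAlgebra 𝔸] [PartialOrder 𝔸] [StarOrderedRing 𝔸]
    (Φ : 𝔸 →ₗ[ℂ] 𝔸)
    (hschwarz : ∀ x : 𝔸, star (Φ x) * Φ x ≤ Φ (star x * x))
    (φ : 𝔸 →ₗ[ℂ] ℂ)
    (hφpos : ∀ a : 𝔸, 0 ≤ a → ∃ r : ℝ, 0 ≤ r ∧ φ a = r)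
    (f g : 𝔸) :
    ‖φ (Φ (star f * g) - star (Φ f) * Φ g)‖ ≤
      Real.sqrt ((φ (Φ (star f * f) - star (Φ f) * Φ f)).re) *
        Real.sqrt ((φ (Φ (star g * g) - star (Φ g) * Φ g)).re) := by
  have hφ : ∀ a, 0 ≤ a → 0 ≤ φ a := fun a ha => by
    obtain ⟨r, hr, hφa⟩ := hφpos a ha
    exact hφa ▸ Complex.zero_le_real.2 hr
  have hB := schwarzDefect_isNonneg hschwarz hφ
  exact hB.isSymm.norm_apply_le_sqrt_mul_sqrt
    (fun x => (Complex.nonneg_iff.1 (hB.nonneg x)).1) f g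

theorem uchiyama_schwarz_state_inequality
    {𝔸 : Type*} [CStarAlgebra 𝔸] [PartialOrder 𝔸] [StarOrderedRing 𝔸]
    (Φ : 𝔸 →ₗ[ℂ] 𝔸)
    (hstar : ∀ x : 𝔸, Φ (star x) = star (Φ x))
    (hschwarz : ∀ x : 𝔸, star (Φ x) * Φ x ≤ Φ (star x * x))
    (φ : 𝔸 →ₗ[ℂ] ℂ)
    (hφpos : ∀ a : 𝔸, 0 ≤ a → ∃ r : ℝ, 0 ≤ r ∧ φ a = r)
    (hφunital : φ 1 = 1)
    (f g : 𝔸) :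
    ‖φ (Φ (star f * g) - star (Φ f) * Φ g)‖ ≤
      Real.sqrt ((φ (Φ (star f * f) - star (Φ f) * Φ f)).re) *
        Real.sqrt ((φ (Φ (star g * g) - star (Φ g) * Φ g)).re) :=
  uchiyama_schwarz_state_inequality_general Φ hschwarz φ hφpos f g
end

section
/- Let {Aₙ} and {Bₙ} be sequences of real symmetric (or Hermitian) n×n matrices. Suppose {Aₙ} converges to {Bₙ} in strong cluster, Bₙ ≥ δIₙ > 0 for all n (hence Bₙ is invertible), and the Aₙ, Bₙ are uniformly bounded in operator norm. Then for every ε > 0 there exist integers N₁(ε) and N₂(ε) such that for all n > N₂(ε), all eigenvalues of Bₙ⁻¹Aₙ lie in (1 − ε, 1 + ε) except for at most N₁(ε) = O(1) outliers. -/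
open Matrix
open scoped ComplexOrder

/-- The operator (spectral) norm of a matrix. -/
noncomputable def opNorm {n : ℕ} (A : Matrix (Fin n) (Fin n) ℂ) : ℝ :=
  ‖Matrix.toEuclideanCLM (𝕜 := ℂ) A‖

/-!
Write `Bₙ⁻¹Aₙ = Mᴴ M Aₙ` with `M = Bₙ^(-1/2)`, so that `Bₙ⁻¹Aₙ` has the spectrum of
`M Aₙ Mᴴ = 1 + M (Aₙ - Bₙ) Mᴴ`, and `‖M‖² ≤ δ⁻¹`. It remains to compare the eigenvalues of
`H = M D Mᴴ` with those of `D = Aₙ - Bₙ`: the span of the eigenvectors of `H` with `|λ| ≥ ε`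
meets the preimage under `Mᴴ` of the span of the eigenvectors of `D` with `|μ| < εδ/2` only in
`0`, since on the first `‖H v‖ ≥ ε ‖v‖` and on the second `‖H v‖ ≤ (ε/2) ‖v‖`. Counting
dimensions, `H` has at most as many eigenvalues with `|λ| ≥ ε` as `D` has with `|μ| ≥ εδ/2`.
-/

open Module Finset
open scoped MatrixOrder Matrix.Norms.L2Operator

namespace CStarAlgebra

variable {A : Type*} [CStarAlgebra A] [PartialOrder A] [StarOrderedRing A]

theorem norm_ringInverse_le_of_algebraMap_le {a : A} {δ : ℝ} (hδ : 0 < δ)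
    (ha : algebraMap ℝ A δ ≤ a) : ‖Ring.inverse a‖ ≤ δ⁻¹ := by
  have hδA : IsStrictlyPositive (algebraMap ℝ A δ) := isStrictlyPositive_algebraMap hδ
  rw [norm_le_iff_le_algebraMap _ (inv_nonneg.2 hδ.le) (hδA.of_le ha).ringInverse.nonneg]
  convert ringInverse_le_ringInverse ha using 1
  simpa using (Ring.inverse_unit ((Units.mk0 δ hδ.ne').map (algebraMap ℝ A).toMonoidHom)).symm

theorem norm_rpow_neg_one_half_sq_le {a : A} {δ : ℝ} (hδ : 0 < δ)
    (ha : algebraMap ℝ A δ ≤ a) : ‖a ^ (-(1 / 2) : ℝ)‖ ^ 2 ≤ δ⁻¹ := by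
  have hpos : IsStrictlyPositive a := (isStrictlyPositive_algebraMap hδ).of_le ha
  have hself : IsSelfAdjoint (a ^ (-(1 / 2) : ℝ)) := CFC.rpow_nonneg.isSelfAdjoint
  rw [sq, ← CStarRing.norm_star_mul_self, hself.star_eq, ← CFC.rpow_add hpos.isUnit]
  norm_num
  rw [← CFC.inverse_eq_rpow_neg_one hpos]
  exact norm_ringInverse_le_of_algebraMap_le hδ ha

end CStarAlgebra

namespace Matrix

variable {𝕜 : Type*} [RCLike 𝕜] {n : Type*} [Fintype n] [DecidableEq n]

theorem algebraMap_le_iff_posSemidef_sub {B : Matrix n n 𝕜} {δ : ℝ} :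
    algebraMap ℝ (Matrix n n 𝕜) δ ≤ B ↔ (B - (δ : 𝕜) • 1).PosSemidef := by
  rw [le_iff, Algebra.algebraMap_eq_smul_one, RCLike.real_smul_eq_coe_smul (K := 𝕜)]

theorem norm_toEuclideanLin_apply_le {m : Type*} [Fintype m] (A : Matrix m n 𝕜)
    (x : EuclideanSpace 𝕜 n) : ‖toEuclideanLin A x‖ ≤ ‖A‖ * ‖x‖ :=
  A.l2_opNorm_mulVec x

theorem toEuclideanLin_surjective_of_isUnit {M : Matrix n n 𝕜} (hM : IsUnit M) :
    Function.Surjective (toEuclideanLin M) := fun w => by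
  obtain ⟨u, hu⟩ := mulVec_surjective_iff_isUnit.2 hM w.ofLp
  exact ⟨WithLp.toLp 2 u, congrArg (WithLp.toLp 2) hu⟩

theorem spectrum_inv_mul_eq_of_mul_mul_eq_one {K : Type*} [Field K] {A B M N : Matrix n n K}
    (h : M * B * N = 1) : spectrum K (B⁻¹ * A) = spectrum K (M * A * N) := by
  have hB : B⁻¹ = N * M := inv_eq_right_inv <| by
    rw [← mul_assoc]; exact mul_eq_one_comm.1 (by rwa [← mul_assoc])
  ext z
  rw [mem_spectrum_iff_isRoot_charpoly, mem_spectrum_iff_isRoot_charpoly, hB, mul_assoc,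
    charpoly_mul_comm, mul_assoc]

namespace IsHermitian

section

variable {A : Matrix n n 𝕜} (hA : A.IsHermitian)
include hA

theorem eigenvectorBasis_repr_toEuclideanLin (v : EuclideanSpace 𝕜 n) (j : n) :
    hA.eigenvectorBasis.repr (toEuclideanLin A v) j =
      hA.eigenvalues j * hA.eigenvectorBasis.repr v j := by
  simp only [eigenvectorBasis, eigenvalues, eigenvalues₀, OrthonormalBasis.repr_reindex]
  exact LinearMap.IsSymmetric.eigenvectorBasis_apply_self_apply _ _ _ _

theorem norm_toEuclideanLin_sq (v : EuclideanSpace 𝕜 n) :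
    ‖toEuclideanLin A v‖ ^ 2 =
      ∑ j, hA.eigenvalues j ^ 2 * ‖hA.eigenvectorBasis.repr v j‖ ^ 2 := by
  rw [← hA.eigenvectorBasis.repr.norm_map, EuclideanSpace.norm_sq_eq]
  simp [eigenvectorBasis_repr_toEuclideanLin, norm_mul, mul_pow]

def spectralSubspace (p : ℝ → Prop) :
    Submodule 𝕜 (EuclideanSpace 𝕜 n) :=
  Submodule.span 𝕜 (hA.eigenvectorBasis '' {j | p (hA.eigenvalues j)})

theorem finrank_spectralSubspace (p : ℝ → Prop) [DecidablePred p] :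
    finrank 𝕜 (hA.spectralSubspace p) = #{j | p (hA.eigenvalues j)} := by
  rw [spectralSubspace, Set.image_eq_range, finrank_span_eq_card]
  · simp [Fintype.card_subtype]
  · exact hA.eigenvectorBasis.orthonormal.linearIndependent.comp _ Subtype.val_injective

theorem eigenvectorBasis_repr_eq_zero {p : ℝ → Prop} {v : EuclideanSpace 𝕜 n}
    (hv : v ∈ hA.spectralSubspace p) {j : n} (hj : ¬ p (hA.eigenvalues j)) :
    hA.eigenvectorBasis.repr v j = 0 := by
  rw [spectralSubspace, ← hA.eigenvectorBasis.coe_toBasis, Basis.mem_span_image] at hv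
  by_contra h
  exact hj (hv (by simpa using h))

theorem mul_norm_le_norm_toEuclideanLin {p : ℝ → Prop} {ε : ℝ} (hε : 0 ≤ ε)
    (hp : ∀ x, p x → ε ≤ |x|) {v : EuclideanSpace 𝕜 n} (hv : v ∈ hA.spectralSubspace p) :
    ε * ‖v‖ ≤ ‖toEuclideanLin A v‖ := by
  refine le_of_pow_le_pow_left₀ two_ne_zero (norm_nonneg _) ?_
  rw [mul_pow, hA.norm_toEuclideanLin_sq, ← hA.eigenvectorBasis.repr.norm_map v,
    EuclideanSpace.norm_sq_eq, mul_sum]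
  refine sum_le_sum fun j _ => ?_
  by_cases hj : p (hA.eigenvalues j)
  · exact mul_le_mul_of_nonneg_right (sq_le_sq.2 (by rw [abs_of_nonneg hε]; exact hp _ hj))
      (by positivity)
  · simp [hA.eigenvectorBasis_repr_eq_zero hv hj]

theorem norm_toEuclideanLin_le_mul {p : ℝ → Prop} {η : ℝ} (hη : 0 ≤ η)
    (hp : ∀ x, p x → |x| ≤ η) {v : EuclideanSpace 𝕜 n} (hv : v ∈ hA.spectralSubspace p) :
    ‖toEuclideanLin A v‖ ≤ η * ‖v‖ := by
  refine le_of_pow_le_pow_left₀ two_ne_zero (by positivity) ?_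
  rw [mul_pow, hA.norm_toEuclideanLin_sq, ← hA.eigenvectorBasis.repr.norm_map v,
    EuclideanSpace.norm_sq_eq, mul_sum]
  refine sum_le_sum fun j _ => ?_
  by_cases hj : p (hA.eigenvalues j)
  · exact mul_le_mul_of_nonneg_right (sq_le_sq.2 (by rw [abs_of_nonneg hη]; exact hp _ hj))
      (by positivity)
  · simp [hA.eigenvectorBasis_repr_eq_zero hv hj]

theorem ncard_spectrum_one_add_diff_le (ε : ℝ) :
    (spectrum 𝕜 (1 + A) \ {z | ‖z - 1‖ < ε}).ncard ≤ #{j | ε ≤ |hA.eigenvalues j|} := by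
  set T := ({j | ε ≤ |hA.eigenvalues j|} : Finset n)
  calc _ ≤ (T.image fun j => 1 + (hA.eigenvalues j : 𝕜) : Set 𝕜).ncard := by
        refine Set.ncard_le_ncard ?_ (finite_toSet _)
        rintro z ⟨hz, hzε⟩
        rw [← sub_add_cancel z 1, ← map_one (algebraMap 𝕜 (Matrix n n 𝕜)),
          spectrum.add_mem_add_iff, hA.spectrum_eq_image_range] at hz
        obtain ⟨_, ⟨j, rfl⟩, hj⟩ := hz
        refine mem_image.2 ⟨j, mem_filter.2 ⟨mem_univ j, ?_⟩, by rw [hj]; ring⟩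
        simpa [← hj] using hzε
    _ ≤ #T := by rw [Set.ncard_coe_finset]; exact card_image_le

end

theorem card_le_card_of_eq_mul_mul_conjTranspose {H D M : Matrix n n 𝕜}
    (hH : H.IsHermitian) (hD : D.IsHermitian) (hM : IsUnit M) (hHD : H = M * D * Mᴴ)
    {ε η : ℝ} (hη : 0 ≤ η) (hεη : ‖M‖ ^ 2 * η < ε) :
    #{j | ε ≤ |hH.eigenvalues j|} ≤ #{j | η ≤ |hD.eigenvalues j|} := by
  have hε : 0 ≤ ε := (mul_nonneg (sq_nonneg _) hη).trans hεη.le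
  set X := (hD.spectralSubspace (¬ η ≤ |·|)).comap (toEuclideanLin Mᴴ)
  have hdisj : Disjoint (hH.spectralSubspace (ε ≤ |·|)) X := by
    refine Submodule.disjoint_def.2 fun v hvW hvX => norm_eq_zero.1 ?_
    have lower := hH.mul_norm_le_norm_toEuclideanLin hε (fun _ h => h) hvW
    have upper := hD.norm_toEuclideanLin_le_mul hη (fun _ h => (not_le.1 h).le) hvX
    have : ‖toEuclideanLin H v‖ ≤ ‖M‖ ^ 2 * η * ‖v‖ :=
      calc ‖toEuclideanLin H v‖
          = ‖toEuclideanLin M (toEuclideanLin D (toEuclideanLin Mᴴ v))‖ := by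
            rw [hHD, toLpLin_mul, toLpLin_mul]; rfl
        _ ≤ ‖M‖ * (η * (‖Mᴴ‖ * ‖v‖)) := by
          refine (M.norm_toEuclideanLin_apply_le _).trans ?_
          gcongr
          exact upper.trans (by gcongr; exact Mᴴ.norm_toEuclideanLin_apply_le v)
        _ = ‖M‖ ^ 2 * η * ‖v‖ := by rw [l2_opNorm_conjTranspose]; ring
    nlinarith [norm_nonneg v]
  have hX : #{j | ¬ η ≤ |hD.eigenvalues j|} ≤ finrank 𝕜 X := by
    refine (hD.finrank_spectralSubspace (¬ η ≤ |·|)).symm.trans_le ?_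
    rw [← Submodule.map_comap_eq_of_surjective (toEuclideanLin_surjective_of_isUnit hM.star)
      (hD.spectralSubspace _)]
    exact Submodule.finrank_map_le _ _
  have hdim := Submodule.finrank_add_finrank_le_of_disjoint hdisj
  rw [finrank_euclideanSpace, hH.finrank_spectralSubspace] at hdim
  have hsplit := card_filter_add_card_filter_not (s := univ) (η ≤ |hD.eigenvalues ·|)
  rw [card_univ] at hsplit
  omega

end IsHermitian

end Matrix

theorem preconditioned_eigenvalue_cluster_general
    (A B : (n : ℕ) → Matrix (Fin n) (Fin n) ℂ)
    (hA : ∀ n, (A n).IsHermitian) (hB : ∀ n, (B n).IsHermitian)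
    -- strong cluster of Aₙ to Bₙ
    (hcluster : ∀ ε > (0 : ℝ), ∃ N₁ N₂ : ℕ, ∀ n : ℕ, N₂ < n →
      (Finset.univ.filter
        (fun j : Fin n => ε ≤ |((hA n).sub (hB n)).eigenvalues j|)).card ≤ N₁)
    -- Bₙ ≥ δ Iₙ > 0
    (δ : ℝ) (hδ : 0 < δ) (hBδ : ∀ n, (B n - (δ : ℂ) • 1).PosSemidef) :
    ∀ ε > (0 : ℝ), ∃ N₁ N₂ : ℕ, ∀ n : ℕ, N₂ < n →
      (spectrum ℂ ((B n)⁻¹ * A n) \ {z : ℂ | ‖z - 1‖ < ε}).ncard ≤ N₁ := by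
  intro ε hε
  obtain ⟨N₁, N₂, hN⟩ := hcluster (ε * δ / 2) (by positivity)
  refine ⟨N₁, N₂, fun n hn => ?_⟩
  have hδB := algebraMap_le_iff_posSemidef_sub.2 (hBδ n)
  set M := B n ^ (-(1 / 2) : ℝ)
  have hMB : M * B n * Mᴴ = 1 := by
    rw [← star_eq_conjTranspose, CFC.rpow_nonneg.isSelfAdjoint.star_eq]
    exact CFC.conjugate_rpow_neg_one_half _ ((isStrictlyPositive_algebraMap hδ).of_le hδB)
  have hM : ‖M‖ ^ 2 * (ε * δ / 2) < ε :=
    calc _ ≤ δ⁻¹ * (ε * δ / 2) := by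
          gcongr; exact CStarAlgebra.norm_rpow_neg_one_half_sq_le hδ hδB
      _ < ε := by field_simp; linarith
  have hH := isHermitian_mul_mul_conjTranspose M ((hA n).sub (hB n))
  have hshift : M * A n * Mᴴ = 1 + M * (A n - B n) * Mᴴ := by
    rw [mul_sub, sub_mul, hMB, add_sub_cancel]
  calc _ ≤ #{j | ε ≤ |hH.eigenvalues j|} := by
        rw [spectrum_inv_mul_eq_of_mul_mul_eq_one hMB, hshift]
        exact hH.ncard_spectrum_one_add_diff_le ε
    _ ≤ #{j | ε * δ / 2 ≤ |((hA n).sub (hB n)).eigenvalues j|} :=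
        IsHermitian.card_le_card_of_eq_mul_mul_conjTranspose hH _
          (IsUnit.of_mul_eq_one _ (by rw [← mul_assoc, hMB])) rfl (by positivity) hM
    _ ≤ N₁ := hN n hn

theorem preconditioned_eigenvalue_cluster
    (A B : (n : ℕ) → Matrix (Fin n) (Fin n) ℂ)
    (hA : ∀ n, (A n).IsHermitian) (hB : ∀ n, (B n).IsHermitian)
    -- strong cluster of Aₙ to Bₙ
    (hcluster : ∀ ε > (0 : ℝ), ∃ N₁ N₂ : ℕ, ∀ n : ℕ, N₂ < n →
      (Finset.univ.filter
        (fun j : Fin n => ε ≤ |((hA n).sub (hB n)).eigenvalues j|)).card ≤ N₁)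
    -- Bₙ ≥ δ Iₙ > 0
    (δ : ℝ) (hδ : 0 < δ) (hBδ : ∀ n, (B n - (δ : ℂ) • 1).PosSemidef)
    -- uniform boundedness in operator norm
    (C : ℝ) (hbound : ∀ n, opNorm (A n) ≤ C ∧ opNorm (B n) ≤ C) :
    ∀ ε > (0 : ℝ), ∃ N₁ N₂ : ℕ, ∀ n : ℕ, N₂ < n →
      (spectrum ℂ ((B n)⁻¹ * A n) \ {z : ℂ | ‖z - 1‖ < ε}).ncard ≤ N₁ :=
  preconditioned_eigenvalue_cluster_general A B hA hB hcluster δ hδ hBδ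
end

section
/- Let Φ be a positive linear map between unital C*-algebras 𝔸 and 𝔹 with Φ(1) ≤ 1, and suppose either 𝔸 or 𝔹 is commutative. If ‖Φ‖ ≤ 1 then Φ is a Schwarz map: Φ(a*a) ≥ Φ(a)*Φ(a) for all a ∈ 𝔸. -/
/-!
Everything reduces to two Cauchy–Schwarz inequalities: `|ψ a|² ≤ ψ 1 · ψ (a⋆a)` for a positive
functional `ψ` (the GNS semi-inner product), and `(∑ cᵢ bᵢ)⋆(∑ cᵢ bᵢ) ≤ ∑ |cᵢ|² bᵢ` for
`bᵢ ≥ 0` with `∑ bᵢ ≤ 1` (expand `∑ (√bᵢ S - cᵢ √bᵢ)⋆(√bᵢ S - cᵢ √bᵢ) ≥ 0`).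
If the codomain is commutative, positivity there is tested on characters `φ`, and each `φ ∘ Φ` is
a positive functional. If the domain is commutative, `a` is normal, and a partition of unity
`pᵢ = gᵢ(a)` subordinate to a fine cover of its spectrum gives `a ≈ ∑ cᵢ pᵢ` and
`a⋆a ≈ ∑ |cᵢ|² pᵢ`; the finite inequality applies to `bᵢ = Φ pᵢ` and passes to the limit because
positive maps are continuous and the positive cone is closed.
-/

open Metric Set WeakDual
open scoped ComplexOrder

theorem IsCompact.exists_partition_of_unity_dist_lt {X : Type*} [MetricSpace X]
    [LocallyCompactSpace X] {K : Set X} (hK : IsCompact K) {ε : ℝ} (hε : 0 < ε) :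
    ∃ (n : ℕ) (c : Fin n → X) (g : Fin n → C(X, ℝ)), (∀ i, c i ∈ K) ∧ (∀ i x, 0 ≤ g i x) ∧
      (∀ x ∈ K, ∑ i, g i x = 1) ∧ ∀ i x, g i x ≠ 0 → dist x (c i) < ε := by
  obtain ⟨t, htK, hcover⟩ := hK.elim_nhds_subcover (ball · ε) fun x _ => ball_mem_nhds x hε
  set c : Fin t.card → X := fun i => t.equivFin.symm i
  have hcover' : K ⊆ ⋃ i, ball (c i) ε := fun x hx => by
    obtain ⟨y, hy, hxy⟩ := mem_iUnion₂.mp (hcover hx)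
    exact mem_iUnion.mpr ⟨t.equivFin ⟨y, hy⟩, by simpa [c] using hxy⟩
  obtain ⟨g, hsupp, hsum, hrange, -⟩ :=
    exists_continuous_sum_one_of_isOpen_isCompact (fun _ => isOpen_ball) hK hcover'
  refine ⟨t.card, c, g, fun i => htK _ (t.equivFin.symm i).2, fun i x => (hrange i x).1,
    fun x hx => by simpa using hsum hx, fun i x hx => hsupp i (subset_tsupport _ hx)⟩

theorem norm_cfc_sub_sum_smul_cfc_le {A : Type*} [CStarAlgebra A] {ι : Type*} [Fintype ι]
    (a : A) [IsStarNormal a] (g : ι → C(ℂ, ℝ)) (c : ι → ℂ) (hg : ∀ i z, 0 ≤ g i z)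
    (hsum : ∀ z ∈ spectrum ℂ a, ∑ i, g i z = 1) {f : ℂ → ℂ} (hf : ContinuousOn f (spectrum ℂ a))
    {δ : ℝ} (hδ : 0 ≤ δ) (hfδ : ∀ i, ∀ z ∈ spectrum ℂ a, g i z ≠ 0 → ‖f z - f (c i)‖ ≤ δ) :
    ‖cfc f a - ∑ i, f (c i) • cfc (fun z => (g i z : ℂ)) a‖ ≤ δ := by
  have hsum_cfc : ∑ i, f (c i) • cfc (fun z => (g i z : ℂ)) a
      = cfc (fun z => ∑ i, f (c i) * g i z) a := by
    rw [← Finset.sum_fn, cfc_sum_univ _ a (fun i => by fun_prop)]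
    exact Finset.sum_congr rfl fun i _ => (cfc_const_mul _ _ a).symm
  have hdiff : ∀ z ∈ spectrum ℂ a,
      f z - ∑ i, f (c i) * g i z = ∑ i, (g i z : ℂ) * (f z - f (c i)) := fun z hz => by
    simp only [mul_sub, Finset.sum_sub_distrib, ← Finset.sum_mul]
    rw [← Complex.ofReal_sum, hsum z hz]
    simp [mul_comm]
  rw [hsum_cfc, ← cfc_sub f _ a hf (by fun_prop), cfc_congr hdiff]
  refine norm_cfc_le hδ fun z hz => ?_
  calc ‖∑ i, (g i z : ℂ) * (f z - f (c i))‖ ≤ ∑ i, g i z * δ := by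
        refine (norm_sum_le _ _).trans (Finset.sum_le_sum fun i _ => ?_)
        rw [norm_mul, Complex.norm_real, Real.norm_of_nonneg (hg i z)]
        by_cases h : g i z = 0
        · simp [h]
        · exact mul_le_mul_of_nonneg_left (hfδ i z hz h) (hg i z)
    _ = δ := by rw [← Finset.sum_mul, hsum z hz, one_mul]

section CStarAlgebra

variable {A : Type*} [CStarAlgebra A] [PartialOrder A]

variable (A) in
def partitionPairs : Set (A × A) :=
  {q | ∃ (n : ℕ) (p : Fin n → A) (c : Fin n → ℂ), (∀ i, 0 ≤ p i) ∧ ∑ i, p i = 1 ∧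
    q = (∑ i, c i • p i, ∑ i, (star (c i) * c i) • p i)}

variable [StarOrderedRing A]

theorem star_sum_smul_mul_sum_smul_le {ι : Type*} [Fintype ι] (c : ι → ℂ) (b : ι → A)
    (hb : ∀ i, 0 ≤ b i) (hsum : ∑ i, b i ≤ 1) :
    star (∑ i, c i • b i) * ∑ i, c i • b i ≤ ∑ i, (star (c i) * c i) • b i := by
  set S := ∑ i, c i • b i
  set s : ι → A := fun i => CFC.sqrt (b i)
  have hs : ∀ i, star (s i) = s i := fun i => (CFC.sqrt_nonneg (b i)).isSelfAdjoint.star_eq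
  have hss : ∀ i, s i * s i = b i := fun i => CFC.sqrt_mul_sqrt_self _ (hb i)
  have hstarS : star S = ∑ i, star (c i) • b i := by
    simp only [S, star_sum, star_smul, (hb _).isSelfAdjoint.star_eq]
  have hexpand : ∀ i, star (s i * S - c i • s i) * (s i * S - c i • s i)
      = star S * b i * S - star S * (c i • b i) - star (c i) • b i * S
        + (star (c i) * c i) • b i := fun i => by
    simp only [star_sub, star_mul, star_smul, hs, ← hss, sub_mul, mul_sub, smul_mul_assoc,
      mul_smul_comm, smul_sub, smul_smul, mul_assoc]
    rw [mul_comm (c i)]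
    abel
  have hsquares : 0 ≤ star S * (∑ i, b i) * S - star S * S - star S * S
      + ∑ i, (star (c i) * c i) • b i := by
    calc (0 : A) ≤ ∑ i, star (s i * S - c i • s i) * (s i * S - c i • s i) :=
          Finset.sum_nonneg fun i _ => star_mul_self_nonneg _
      _ = _ := by
        simp only [hexpand, Finset.sum_add_distrib, Finset.sum_sub_distrib, ← Finset.mul_sum,
          ← Finset.sum_mul, ← hstarS]
        rfl
  have hcompress : star S * (∑ i, b i) * S ≤ star S * S := by
    simpa using star_left_conjugate_le_conjugate hsum S
  rw [← sub_nonneg]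
  calc (0 : A) ≤ _ := hsquares
    _ ≤ star S * S - star S * S - star S * S + ∑ i, (star (c i) * c i) • b i := by gcongr
    _ = _ := by abel

theorem mem_closure_partitionPairs (a : A) [IsStarNormal a] :
    (a, star a * a) ∈ closure (partitionPairs A) := by
  rw [Metric.mem_closure_iff]
  intro δ hδ
  have hσ : IsCompact (spectrum ℂ a) := spectrum.isCompact a
  obtain ⟨ε, hε, hunif⟩ := Metric.uniformContinuousOn_iff.mp
    (hσ.uniformContinuousOn_of_continuous (f := fun z : ℂ => star z * z) (by fun_prop))
    _ (half_pos hδ)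
  obtain ⟨n, c, g, hcσ, hg, hsum, hnear⟩ :=
    hσ.exists_partition_of_unity_dist_lt (lt_min hε (half_pos hδ))
  set p : Fin n → A := fun i => cfc (fun z => (g i z : ℂ)) a
  have hp : ∀ i, 0 ≤ p i := fun i => cfc_nonneg fun z _ => by exact_mod_cast hg i z
  have hp_sum : ∑ i, p i = 1 := by
    rw [← cfc_sum_univ _ a (fun i => by fun_prop), ← cfc_const_one ℂ a]
    refine cfc_congr fun z hz => ?_
    simp [← Complex.ofReal_sum, hsum z hz]
  have happrox : ‖a - ∑ i, c i • p i‖ ≤ δ / 2 := by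
    have := norm_cfc_sub_sum_smul_cfc_le a g c hg hsum (f := fun z => z) (by fun_prop)
      (half_pos hδ).le fun i z _ h =>
        (dist_eq_norm z (c i) ▸ hnear i z h).le.trans (min_le_right _ _)
    rwa [cfc_id' ℂ a] at this
  have happrox_sq : ‖star a * a - ∑ i, (star (c i) * c i) • p i‖ ≤ δ / 2 := by
    have := norm_cfc_sub_sum_smul_cfc_le a g c hg hsum (f := fun z => star z * z)
      (by fun_prop) (half_pos hδ).le fun i z hz h =>
        (dist_eq_norm (star z * z) _ ▸
          hunif z hz (c i) (hcσ i) ((hnear i z h).trans_le (min_le_left _ _))).le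
    rwa [cfc_mul _ _ a, cfc_star, cfc_id' ℂ a] at this
  refine ⟨_, ⟨n, p, c, hp, hp_sum, rfl⟩, ?_⟩
  rw [Prod.dist_eq, max_lt_iff, dist_eq_norm, dist_eq_norm]
  constructor <;> linarith

namespace PositiveLinearMap

theorem star_apply_mul_apply_le (ψ : A →ₚ[ℂ] ℂ) (hψ : ψ 1 ≤ 1) (a : A) :
    star (ψ a) * ψ a ≤ ψ (star a * a) := by
  have hcs := norm_inner_le_norm (𝕜 := ℂ) (ψ.toPreGNS 1) (ψ.toPreGNS a)
  rw [ψ.preGNS_inner_def] at hcs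
  simp only [ofPreGNS_toPreGNS, star_one, one_mul] at hcs
  have h1 := ψ.preGNS_norm_sq (ψ.toPreGNS 1)
  have h2 := ψ.preGNS_norm_sq (ψ.toPreGNS a)
  simp only [ofPreGNS_toPreGNS, star_one, one_mul] at h1 h2
  have hone : ‖ψ.toPreGNS 1‖ ^ 2 ≤ 1 := by exact_mod_cast h1 ▸ hψ
  rw [← h2, Complex.star_def, Complex.conj_mul']
  norm_cast
  calc ‖ψ a‖ ^ 2 ≤ ‖ψ.toPreGNS 1‖ ^ 2 * ‖ψ.toPreGNS a‖ ^ 2 := by rw [← mul_pow]; gcongr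
    _ ≤ ‖ψ.toPreGNS a‖ ^ 2 := mul_le_of_le_one_left (by positivity) hone

theorem star_apply_mul_apply_le_of_commCStarAlgebra {C : Type*} [CommCStarAlgebra C]
    [PartialOrder C] [StarOrderedRing C] (Φ : A →ₚ[ℂ] C) (hΦ : Φ 1 ≤ 1) (a : A) :
    star (Φ a) * Φ a ≤ Φ (star a * a) := by
  rw [← map_le_map_iff (gelfandStarTransform C)]
  intro φ
  set ψ : A →ₚ[ℂ] ℂ := (ofClass φ).comp Φ
  have hψ : ∀ x, ψ x = φ (Φ x) := fun _ => rfl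
  have hψ1 : ψ 1 ≤ 1 := by simpa [hψ] using OrderHomClass.mono φ hΦ
  simpa [hψ, map_star, Complex.star_def] using ψ.star_apply_mul_apply_le hψ1 a

theorem star_apply_mul_apply_le_of_isStarNormal {B : Type*} [CStarAlgebra B] [PartialOrder B]
    [StarOrderedRing B] (Φ : A →ₚ[ℂ] B) (hΦ : Φ 1 ≤ 1) (a : A) [IsStarNormal a] :
    star (Φ a) * Φ a ≤ Φ (star a * a) := by
  have hpairs : ∀ q ∈ partitionPairs A, star (Φ q.1) * Φ q.1 ≤ Φ q.2 := by
    rintro _ ⟨n, p, c, hp, hsum, rfl⟩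
    simp only [map_sum, map_smul]
    exact star_sum_smul_mul_sum_smul_le c (Φ ∘ p) (fun i => Φ.map_nonneg (hp i))
      (by simpa [← map_sum, hsum] using hΦ)
  have hclosed : IsClosed {q : A × A | star (Φ q.1) * Φ q.1 ≤ Φ q.2} :=
    isClosed_le (by fun_prop) (by fun_prop)
  exact closure_minimal hpairs hclosed (mem_closure_partitionPairs a)

end PositiveLinearMap

end CStarAlgebra

theorem positive_contractive_commutative_is_schwarz_general
    {𝔸 𝔹 : Type*} [CStarAlgebra 𝔸] [PartialOrder 𝔸] [StarOrderedRing 𝔸]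
    [CStarAlgebra 𝔹] [PartialOrder 𝔹] [StarOrderedRing 𝔹]
    (hcomm : (∀ x y : 𝔸, x * y = y * x) ∨ (∀ x y : 𝔹, x * y = y * x))
    (Φ : 𝔸 →ₗ[ℂ] 𝔹)
    (hpos : ∀ a : 𝔸, 0 ≤ a → 0 ≤ Φ a)
    (hunit : Φ 1 ≤ 1) :
    ∀ a : 𝔸, star (Φ a) * Φ a ≤ Φ (star a * a) := by
  intro a
  rcases hcomm with h𝔸 | h𝔹
  · have : IsStarNormal a := ⟨h𝔸 _ _⟩
    exact (PositiveLinearMap.mk₀ Φ hpos).star_apply_mul_apply_le_of_isStarNormal hunit a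
  · let _ : CommCStarAlgebra 𝔹 := { ‹CStarAlgebra 𝔹› with mul_comm := h𝔹 }
    exact (PositiveLinearMap.mk₀ Φ hpos).star_apply_mul_apply_le_of_commCStarAlgebra hunit a

theorem positive_contractive_commutative_is_schwarz
    {𝔸 𝔹 : Type*} [CStarAlgebra 𝔸] [PartialOrder 𝔸] [StarOrderedRing 𝔸]
    [CStarAlgebra 𝔹] [PartialOrder 𝔹] [StarOrderedRing 𝔹]
    (hcomm : (∀ x y : 𝔸, x * y = y * x) ∨ (∀ x y : 𝔹, x * y = y * x))
    (Φ : 𝔸 →ₗ[ℂ] 𝔹)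
    (hpos : ∀ a : 𝔸, 0 ≤ a → 0 ≤ Φ a)
    (hunit : Φ 1 ≤ 1)
    (hcontr : ∀ a : 𝔸, ‖Φ a‖ ≤ ‖a‖) :
    ∀ a : 𝔸, star (Φ a) * Φ a ≤ Φ (star a * a) :=
  positive_contractive_commutative_is_schwarz_general hcomm Φ hpos hunit
end
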